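/- Let Φ : SO(2n) → ℂ be defined by Φ(x) = Σ_{k=1}^n a_k (x_{1,2k−1} + i x_{1,2k})^d with all a_k ∈ ℂ nonzero and d ≥ 1. Then for each k, the derivative along Y_{2k−1,2k} ∈ 𝔰𝔬(2n) satisfies Y_{2k−1,2k}(Φ)(x) = (i a_k d/√2)·(x_{1,2k−1} + i x_{1,2k})^d, and at every x ∈ SO(2n) at least one of these n derivatives is nonzero; hence Φ is a submersion (has nowhere-vanishing gradient). -/

import Mathlib

/-- For `Φ(x) = Σ_k a_k (x_{1,2k−1} + i x_{1,2k})^d` on `SO(2n)` with all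
`a_k ≠ 0` and `d ≥ 1`, the derivative along `Y_{2k−1,2k} ∈ 𝔰𝔬(2n)` (acting as the
directional derivative in direction `x·Y`) equals `(i a_k d/√2)(x_{1,2k−1}+i x_{1,2k})^d`,
and at every `x ∈ SO(2n)` at least one of these `n` derivatives is nonzero. -/
theorem so_eigenfunction_submersive
    (n d : ℕ) (hn : 1 ≤ n) (hd : 1 ≤ d)
    (a : Fin n → ℂ) (ha : ∀ k, a k ≠ 0)
    (row0 : Fin (2 * n)) (hrow0 : (row0 : ℕ) = 0)
    (i j : Fin n → Fin (2 * n))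
    (hi : ∀ k, (i k : ℕ) = 2 * (k : ℕ)) (hj : ∀ k, (j k : ℕ) = 2 * (k : ℕ) + 1)
    (Φ : (Fin (2 * n) → Fin (2 * n) → ℝ) → ℂ)
    (hΦ : ∀ x, Φ x = ∑ k,
      a k * (((x row0 (i k) : ℝ) : ℂ) + Complex.I * ((x row0 (j k) : ℝ) : ℂ)) ^ d)
    (Y : Fin n → Fin (2 * n) → Fin (2 * n) → ℝ)
    (hY : ∀ k l α, Y k l α =
      ((if l = i k ∧ α = j k then (1 : ℝ) else 0)
        - (if l = j k ∧ α = i k then 1 else 0)) / Real.sqrt 2)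
    (x : Fin (2 * n) → Fin (2 * n) → ℝ)
    (hx : Matrix.of x * (Matrix.of x).transpose = 1)
    (hdet : (Matrix.of x).det = 1) :
    (∀ k : Fin n,
      fderiv ℝ Φ x (fun l α => ∑ m, x l m * Y k m α) =
        Complex.I * a k * (d : ℂ) / (Real.sqrt 2 : ℝ) *
          (((x row0 (i k) : ℝ) : ℂ) + Complex.I * ((x row0 (j k) : ℝ) : ℂ)) ^ d) ∧
    (∃ k : Fin n, fderiv ℝ Φ x (fun l α => ∑ m, x l m * Y k m α) ≠ 0) := by
  -- injectivity / disjointness of indices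
  have hij : ∀ k k' : Fin n, i k ≠ j k' := by
    intro k k' h
    have := congrArg Fin.val h
    rw [hi, hj] at this; omega
  have hii : ∀ k k' : Fin n, (i k = i k') ↔ k = k' := by
    intro k k'
    constructor
    · intro h; have := congrArg Fin.val h; rw [hi, hi] at this
      exact Fin.ext (by omega)
    · rintro rfl; rfl
  have hjj : ∀ k k' : Fin n, (j k = j k') ↔ k = k' := by
    intro k k'
    constructor
    · intro h; have := congrArg Fin.val h; rw [hj, hj] at this
      exact Fin.ext (by omega)
    · rintro rfl; rfl
  -- abbreviations
  set g : Fin n → ℂ := fun k =>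
    ((x row0 (i k) : ℝ) : ℂ) + Complex.I * ((x row0 (j k) : ℝ) : ℂ) with hg
  set V : Fin n → (Fin (2 * n) → Fin (2 * n) → ℝ) :=
    fun k l α => ∑ m, x l m * Y k m α with hV
  -- the linear maps
  set P : Fin (2 * n) → (Fin (2 * n) → Fin (2 * n) → ℝ) →L[ℝ] ℝ := fun α =>
    (ContinuousLinearMap.proj α : (Fin (2 * n) → ℝ) →L[ℝ] ℝ).comp
      (ContinuousLinearMap.proj row0 :
        (Fin (2 * n) → Fin (2 * n) → ℝ) →L[ℝ] (Fin (2 * n) → ℝ)) with hP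
  set L : Fin n → (Fin (2 * n) → Fin (2 * n) → ℝ) →L[ℝ] ℂ := fun k =>
    Complex.ofRealCLM.comp (P (i k)) + Complex.I • Complex.ofRealCLM.comp (P (j k)) with hL
  have hLapp : ∀ k (y : Fin (2 * n) → Fin (2 * n) → ℝ),
      L k y = ((y row0 (i k) : ℝ) : ℂ) + Complex.I * ((y row0 (j k) : ℝ) : ℂ) := by
    intro k y; simp [hL, hP]
  -- derivative of the inner function
  have hgL : ∀ k, HasFDerivAt
      (fun y : Fin (2 * n) → Fin (2 * n) → ℝ =>
        ((y row0 (i k) : ℝ) : ℂ) + Complex.I * ((y row0 (j k) : ℝ) : ℂ)) (L k) x := by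
    intro k
    have h := (L k).hasFDerivAt (x := x)
    have heq : ⇑(L k) = fun y : Fin (2 * n) → Fin (2 * n) → ℝ =>
        ((y row0 (i k) : ℝ) : ℂ) + Complex.I * ((y row0 (j k) : ℝ) : ℂ) :=
      funext fun y => hLapp k y
    rwa [heq] at h
  -- derivative CLMs for each term
  set H : Fin n → (ℂ →L[ℝ] ℂ) := fun k =>
    (((1 : ℂ →L[ℂ] ℂ).smulRight ((d : ℂ) * g k ^ (d - 1))).restrictScalars ℝ) with hH
  set D : Fin n → ((Fin (2 * n) → Fin (2 * n) → ℝ) →L[ℝ] ℂ) := fun k =>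
    a k • ((H k).comp (L k)) with hD
  have hterm : ∀ k, HasFDerivAt
      (fun y : Fin (2 * n) → Fin (2 * n) → ℝ =>
        a k * (((y row0 (i k) : ℝ) : ℂ) + Complex.I * ((y row0 (j k) : ℝ) : ℂ)) ^ d)
      (D k) x := by
    intro k
    have hpow : HasFDerivAt (fun z : ℂ => z ^ d) (H k) (g k) :=
      (hasDerivAt_pow d (g k)).hasFDerivAt.restrictScalars ℝ
    exact ((hpow.comp x (hgL k)).const_mul (a k))
  have hΦderiv : HasFDerivAt Φ (∑ k, D k) x := by
    have : HasFDerivAt (fun y => ∑ k, a k *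
        (((y row0 (i k) : ℝ) : ℂ) + Complex.I * ((y row0 (j k) : ℝ) : ℂ)) ^ d)
        (∑ k, D k) x := HasFDerivAt.fun_sum (fun k _ => hterm k)
    have heq : Φ = fun y => ∑ k, a k *
        (((y row0 (i k) : ℝ) : ℂ) + Complex.I * ((y row0 (j k) : ℝ) : ℂ)) ^ d :=
      funext hΦ
    rwa [heq]
  have hfd : fderiv ℝ Φ x = ∑ k, D k := hΦderiv.fderiv
  -- value of V k on row0
  have hVval : ∀ k α, V k row0 α =
      ((if α = j k then x row0 (i k) else 0)
        - (if α = i k then x row0 (j k) else 0)) / Real.sqrt 2 := by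
    intro k α
    have step : ∀ m : Fin (2 * n), x row0 m * Y k m α =
        ((if m = i k then (if α = j k then x row0 (i k) else 0) else 0)
          - (if m = j k then (if α = i k then x row0 (j k) else 0) else 0)) / Real.sqrt 2 := by
      intro m
      rw [hY]
      by_cases h1 : m = i k <;> by_cases h2 : α = j k <;> by_cases h3 : m = j k <;>
        by_cases h4 : α = i k <;>
        simp [h1, h2, h3, h4, hij k k, (hij k k).symm, Ne.symm (hij k k)] <;>
        first
          | rfl
          | (subst h1; rfl)
          | (subst h3; rfl)
          | ring
    show (∑ m, x row0 m * Y k m α) = _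
    rw [Finset.sum_congr rfl (fun m _ => step m), ← Finset.sum_div,
      Finset.sum_sub_distrib, Finset.sum_ite_eq', Finset.sum_ite_eq']
    simp
  -- L k' applied to V k
  have hLV : ∀ k k' : Fin n, L k' (V k) =
      if k' = k then Complex.I * g k / (Real.sqrt 2 : ℝ) else 0 := by
    intro k k'
    rw [hLapp, hVval, hVval]
    by_cases h : k' = k
    · subst h
      have hne : i k' ≠ j k' := hij k' k'
      simp only [if_neg hne, if_pos rfl, if_neg (Ne.symm hne)]
      push_cast
      rw [hg]
      have hI := Complex.I_sq
      field_simp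
      ring_nf
      rw [Complex.I_sq]
      ring
    · rw [if_neg h]
      rw [if_neg (fun hh => h ((hii k' k).mp hh)), if_neg (fun hh => h ((hjj k' k).mp hh))]
      rw [if_neg (hij k' k), if_neg (fun hh => hij k k' hh.symm)]
      simp
  -- the derivative value
  have hval : ∀ k : Fin n, fderiv ℝ Φ x (V k) =
      Complex.I * a k * (d : ℂ) / (Real.sqrt 2 : ℝ) * g k ^ d := by
    intro k
    rw [hfd]
    rw [ContinuousLinearMap.sum_apply]
    have hsum : ∀ k' : Fin n, D k' (V k) =
        if k' = k then Complex.I * a k * (d : ℂ) / (Real.sqrt 2 : ℝ) * g k ^ d else 0 := by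
      intro k'
      rw [hD]
      simp only [ContinuousLinearMap.smul_apply, ContinuousLinearMap.comp_apply]
      rw [hLV]
      by_cases h : k' = k
      · subst h
        simp only [if_pos rfl, hH, ContinuousLinearMap.coe_restrictScalars',
          ContinuousLinearMap.smulRight_apply, ContinuousLinearMap.one_apply, smul_eq_mul]
        have hpow : g k' ^ d = g k' ^ (d - 1) * g k' := by
          rw [← pow_succ]; congr 1; omega
        have hs2 : ((Real.sqrt 2 : ℝ) : ℂ) ≠ 0 := by
          simp [Real.sqrt_eq_zero']
        rw [hpow]
        field_simp
        simp only [if_true]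
        ring
      · rw [if_neg h, if_neg h]
        simp
    rw [Finset.sum_congr rfl (fun k' _ => hsum k')]
    simp [Finset.sum_ite_eq']
  refine ⟨fun k => hval k, ?_⟩
  -- existence of nonzero g k
  have hrownorm : ∑ m, x row0 m * x row0 m = 1 := by
    have := congrFun (congrFun hx row0) row0
    simpa [Matrix.mul_apply, Matrix.transpose_apply, Matrix.one_apply] using this
  have hex : ∃ k : Fin n, g k ≠ 0 := by
    by_contra hc
    push_neg at hc
    have hzero : ∀ m : Fin (2 * n), x row0 m = 0 := by
      intro m
      have hm2 : (m : ℕ) / 2 < n := by omega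
      set k : Fin n := ⟨(m : ℕ) / 2, hm2⟩ with hk
      have h0 := hc k
      rw [hg] at h0
      have hre : x row0 (i k) = 0 := by
        have := congrArg Complex.re h0; simpa using this
      have him : x row0 (j k) = 0 := by
        have := congrArg Complex.im h0; simpa using this
      rcases Nat.even_or_odd (m : ℕ) with he | ho
      · have : m = i k := by
          apply Fin.ext; rw [hi]; simp [hk]
          rcases he with ⟨c, hc2⟩; omega
        rw [this]; exact hre
      · have : m = j k := by
          apply Fin.ext; rw [hj]; simp [hk]
          rcases ho with ⟨c, hc2⟩; omega
        rw [this]; exact him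
    rw [Finset.sum_congr rfl (fun m _ => by rw [hzero m, mul_zero])] at hrownorm
    simp at hrownorm
  obtain ⟨k, hk⟩ := hex
  refine ⟨k, ?_⟩
  rw [hval k]
  have hs2 : ((Real.sqrt 2 : ℝ) : ℂ) ≠ 0 := by
    simp [Real.sqrt_eq_zero']
  apply mul_ne_zero
  · apply div_ne_zero _ hs2
    exact mul_ne_zero (mul_ne_zero Complex.I_ne_zero (ha k))
      (Nat.cast_ne_zero.mpr (by omega))
  · exact pow_ne_zero d hk
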